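/- arXiv:cs/0101017 — 4 statements merged into one kernel-verified Lean document; each statement's English description precedes it below -/
import Mathlib

section
/- A property P ⊆ Σ^ω is a relative safety property of an ω-language L_ω if and only if L_ω ∩ lim(pre(L_ω ∩ P)) ⊆ P, where lim(M) for a language M ⊆ Σ* is the set of ω-words having infinitely many prefixes in M. -/
/-- The length-`n` prefix of an ω-word. -/
def ωtake {α : Type*} (x : ℕ → α) (n : ℕ) : List α := List.ofFn (fun i : Fin n => x i)

/-- Concatenation of a finite word with an ω-word. -/
def ωcat {α : Type*} (w : List α) (x : ℕ → α) : ℕ → α :=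
  fun n => if h : n < w.length then w.get ⟨n, h⟩ else x (n - w.length)

/-- The set of finite prefixes of ω-words in `L`. -/
def Pre {α : Type*} (L : Set (ℕ → α)) : Set (List α) := {w | ∃ x ∈ L, ∃ n, w = ωtake x n}

/-- Eilenberg limit: ω-words with infinitely many prefixes in `M`. -/
def Lim {α : Type*} (M : Set (List α)) : Set (ℕ → α) := {x | {n | ωtake x n ∈ M}.Infinite}

/-- `P` is a relative liveness property of `L`. -/
def RelLive {α : Type*} (P L : Set (ℕ → α)) : Prop :=
  ∀ w ∈ Pre L, ∃ x : ℕ → α, ωcat w x ∈ L ∧ ωcat w x ∈ P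

/-- `P` is a relative safety property of `L`. -/
def RelSafe {α : Type*} (P L : Set (ℕ → α)) : Prop :=
  ∀ x ∈ L, x ∉ P → ∃ n : ℕ, ∀ z : ℕ → α, ωcat (ωtake x n) z ∈ L → ωcat (ωtake x n) z ∉ P

lemma ωtake_length {α : Type*} (x : ℕ → α) (n : ℕ) : (ωtake x n).length = n := by
  simp [ωtake]

lemma ωtake_get {α : Type*} (x : ℕ → α) (n i : ℕ) (h : i < (ωtake x n).length) :
    (ωtake x n).get ⟨i, h⟩ = x i := by
  simp [ωtake]

lemma ωcat_ωtake_tail {α : Type*} (y : ℕ → α) (n : ℕ) :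
    ωcat (ωtake y n) (fun k => y (k + n)) = y := by
  funext i
  simp only [ωcat, ωtake_length]
  split_ifs with h
  · exact ωtake_get y n i _
  · congr 1; omega

lemma ωtake_ωcat {α : Type*} (x z : ℕ → α) (n : ℕ) :
    ωtake (ωcat (ωtake x n) z) n = ωtake x n := by
  apply List.ext_get (by simp [ωtake_length])
  intro i h1 h2
  rw [ωtake_get, ωtake_get]
  simp only [ωcat, ωtake_length]
  rw [dif_pos (by simpa [ωtake_length] using h1)]
  exact ωtake_get x n i _

lemma ωtake_eq_of_agree {α : Type*} {x y : ℕ → α} {m : ℕ} (h : ωtake x m = ωtake y m)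
    {n : ℕ} (hn : n ≤ m) : ωtake x n = ωtake y n := by
  apply List.ext_get (by simp [ωtake_length])
  intro i h1 h2
  rw [ωtake_get, ωtake_get]
  have hi : i < m := lt_of_lt_of_le (by simpa [ωtake_length] using h1) hn
  have := List.get_of_eq h ⟨i, by rw [ωtake_length]; exact hi⟩
  simpa [ωtake, List.getElem_ofFn] using this

theorem relSafe_iff_lim {α : Type*} (P L : Set (ℕ → α)) :
    RelSafe P L ↔ L ∩ Lim (Pre (L ∩ P)) ⊆ P := by
  constructor
  · intro hs x ⟨hxL, hxLim⟩
    by_contra hxP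
    obtain ⟨n, hn⟩ := hs x hxL hxP
    obtain ⟨m, hm, hnm⟩ := hxLim.exists_gt n
    obtain ⟨y, hy, k, hk⟩ := hm
    have hkm : k = m := by
      have := congrArg List.length hk
      simpa [ωtake_length] using this.symm
    subst hkm
    have hagree : ωtake x n = ωtake y n := ωtake_eq_of_agree hk hnm.le
    have hy' : ωcat (ωtake x n) (fun j => y (j + n)) = y := by
      rw [hagree]; exact ωcat_ωtake_tail y n
    have := hn (fun j => y (j + n)) (by rw [hy']; exact hy.1)
    rw [hy'] at this
    exact this hy.2
  · intro h x hxL hxP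
    by_contra hc
    push_neg at hc
    apply hxP
    apply h
    refine ⟨hxL, ?_⟩
    have : {n | ωtake x n ∈ Pre (L ∩ P)} = Set.univ := by
      ext n
      simp only [Set.mem_setOf_eq, Set.mem_univ, iff_true]
      obtain ⟨z, hzL, hzP⟩ := hc n
      exact ⟨ωcat (ωtake x n) z, ⟨hzL, hzP⟩, n, (ωtake_ωcat x z n).symm⟩
    rw [Lim, Set.mem_setOf_eq, this]
    exact Set.infinite_univ
end

section
/- An ω-language L_ω satisfies a property P (i.e., L_ω ⊆ P) if and only if P is both a relative safety property and a relative liveness property of L_ω. -/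
lemma ωcat_ωtake_shift {α : Type*} (x : ℕ → α) (n : ℕ) :
    ωcat (ωtake x n) (fun k => x (n + k)) = x := by
  funext m
  simp only [ωcat, ωtake, List.length_ofFn]
  split_ifs with h
  · simp
  · congr 1; omega

theorem sat_iff_relSafe_and_relLive {α : Type*} (P L : Set (ℕ → α)) :
    L ⊆ P ↔ RelSafe P L ∧ RelLive P L := by
  constructor
  · intro hLP
    refine ⟨fun x hx hxP => absurd (hLP hx) hxP, ?_⟩
    rintro w ⟨x, hx, n, rfl⟩
    exact ⟨fun k => x (n + k), by rw [ωcat_ωtake_shift]; exact ⟨hx, hLP hx⟩⟩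
  · rintro ⟨hS, hL⟩ x hx
    by_contra hxP
    obtain ⟨n, hn⟩ := hS x hx hxP
    obtain ⟨z, hz1, hz2⟩ := hL (ωtake x n) ⟨x, hx, n, rfl⟩
    exact hn z hz1 hz2
end

section
/- A property P is a relative liveness property of an ω-language L_ω if and only if L_ω ∩ P is a dense subset of L_ω in the Cantor topology on Σ^ω. -/
lemma ωcat_take_lt {α : Type*} (x z : ℕ → α) (n i : ℕ) (h : i < n) :
    ωcat (ωtake x n) z i = x i := by
  simp [ωcat, ωtake, h]

lemma ωcat_take_eq {α : Type*} (x y : ℕ → α) (n : ℕ) (h : ∀ i < n, y i = x i) :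
    ωcat (ωtake x n) (fun k => y (n + k)) = y := by
  funext i
  by_cases hi : i < n
  · rw [ωcat_take_lt x _ n i hi]; exact (h i hi).symm
  · simp only [ωcat, ωtake, List.length_ofFn, hi, dif_neg, not_false_iff]
    congr 1
    omega

theorem relLive_iff_dense {α : Type*} [TopologicalSpace α] [DiscreteTopology α]
    (P L : Set (ℕ → α)) :
    RelLive P L ↔ Dense (Subtype.val ⁻¹' (L ∩ P) : Set L) := by
  have key : Dense (Subtype.val ⁻¹' (L ∩ P) : Set L) ↔ ∀ x ∈ L, x ∈ closure (L ∩ P) := by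
    constructor
    · intro hd x hx
      have := hd ⟨x, hx⟩
      rw [closure_subtype] at this
      have himg : (Subtype.val '' (Subtype.val ⁻¹' (L ∩ P) : Set L)) ⊆ L ∩ P :=
        Set.image_preimage_subset _ _
      exact closure_mono himg this
    · intro h p
      rw [closure_subtype]
      refine closure_mono ?_ (h p.1 p.2)
      intro y hy
      exact ⟨⟨y, hy.1⟩, hy, rfl⟩
  rw [key]
  constructor
  · intro hlive x hx
    rw [mem_closure_iff]
    intro o ho hxo
    rw [isOpen_pi_iff] at ho
    obtain ⟨I, u, hu, hsub⟩ := ho x hxo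
    set n := (I.sup id) + 1 with hn
    obtain ⟨z, hzL, hzP⟩ := hlive (ωtake x n) ⟨x, hx, n, rfl⟩
    refine ⟨ωcat (ωtake x n) z, hsub ?_, hzL, hzP⟩
    intro i hi
    have hiI : i < n := by
      have := Finset.le_sup (f := id) hi; simp only [id] at this
      omega
    rw [ωcat_take_lt x z n i hiI]
    exact (hu i hi).2
  · intro hd w hw
    obtain ⟨x, hx, n, rfl⟩ := hw
    have hcl := hd x hx
    rw [mem_closure_iff] at hcl
    have hopen : IsOpen ((Finset.range n : Set ℕ).pi (fun i => ({x i} : Set α))) := by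
      apply isOpen_set_pi (Finset.finite_toSet _)
      intro i _
      exact isOpen_discrete _
    have hmem : x ∈ (Finset.range n : Set ℕ).pi (fun i => ({x i} : Set α)) := by
      intro i _; rfl
    obtain ⟨y, hy, hyLP⟩ := hcl _ hopen hmem
    refine ⟨fun k => y (n + k), ?_⟩
    have hagree : ∀ i < n, y i = x i := by
      intro i hi
      exact hy i (by simpa using hi)
    rw [ωcat_take_eq x y n hagree]
    exact hyLP
end

section
/- The inclusion lim(h(L)) ⊆ h(lim(L)) can fail for prefix-closed non-regular languages: for L = pre({b^i a^i | i ∈ ℕ}) and h with h(a)=a, h(b)=ε, the ω-word a^ω is in lim(h(L)) but not in h(lim(L)). -/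
/-- Letterwise extension of an alphabetic homomorphism (none plays the role of the empty word). -/
def hword {α β : Type*} (h : α → Option β) (w : List α) : List β := w.filterMap h

/-- w is a prefix of the ω-word y. -/
def IsωPrefix {β : Type*} (w : List β) (y : ℕ → β) : Prop := w = ωtake y w.length

/-- y is the image of the ω-word x under the abstraction homomorphism h:
all images of prefixes of x are prefixes of y and their lengths are unbounded
(i.e. h(x) is defined and equals y). -/
def ωMapsTo {α β : Type*} (h : α → Option β) (x : ℕ → α) (y : ℕ → β) : Prop :=
  (∀ m : ℕ, IsωPrefix (hword h (ωtake x m)) y) ∧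
  ∀ N : ℕ, ∃ m : ℕ, N ≤ (hword h (ωtake x m)).length

/-- A finite-word language is prefix-closed. -/
def PrefixClosed {α : Type*} (M : Set (List α)) : Prop :=
  ∀ u v : List α, u <+: v → v ∈ M → u ∈ M

/-- The prefix closure of {bⁱaⁱ}, i.e. {bⁱaʲ | j ≤ i}, with b = false, a = true. -/
def Lba : Set (List Bool) :=
  {w | ∃ i j : ℕ, j ≤ i ∧ w = List.replicate i false ++ List.replicate j true}

/-- h(a) = a, h(b) = ε; the abstract alphabet Σ' = {a} is Unit. -/
def hba : Bool → Option Unit := fun c => if c then some () else none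


lemma fm_false (n : ℕ) : (List.replicate n false).filterMap hba = [] := by
  induction n with
  | zero => rfl
  | succ k ih => simp [List.replicate_succ, hba, ih]

lemma fm_true (n : ℕ) : (List.replicate n true).filterMap hba = List.replicate n () := by
  induction n with
  | zero => rfl
  | succ k ih => simp [List.replicate_succ, hba, ih]

theorem lim_hom_fails_not_regular :
    (fun _ => ()) ∈ Lim (hword hba '' Lba) ∧
    (fun _ => ()) ∉ {y : ℕ → Unit | ∃ x ∈ Lim Lba, ωMapsTo hba x y} := by
  constructor
  · have : {n | ωtake (fun _ => ()) n ∈ hword hba '' Lba} = Set.univ := by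
      apply Set.eq_univ_of_forall
      intro n
      refine ⟨List.replicate n false ++ List.replicate n true, ⟨n, n, le_rfl, rfl⟩, ?_⟩
      simp [hword, ωtake, fm_false, fm_true, List.ofFn_const]
    simp only [Lim, this]
    exact Set.infinite_univ
  · rintro ⟨x, hx, hmap⟩
    -- get a position p with x p = true
    obtain ⟨m, hm⟩ := hmap.2 1
    have hp : ∃ p, x p = true := by
      by_contra hall
      push_neg at hall
      have hfalse : ∀ k, x k = false := fun k => by
        cases hk : x k with
        | false => rfl
        | true => exact absurd hk (hall k)
      have : ωtake x m = List.replicate m false := by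
        simp only [ωtake]
        have : (fun i : Fin m => x i) = fun _ : Fin m => false := by
          funext i; exact hfalse i
        rw [this, List.ofFn_const]
      rw [hword, this, fm_false] at hm
      simp at hm
    obtain ⟨p, hp⟩ := hp
    -- pick n ∈ S with n > 2p and n > p
    obtain ⟨n, hnS, hn⟩ := hx.exists_gt (2 * p)
    obtain ⟨i, j, hji, hw⟩ := hnS
    have hlen : i + j = n := by
      have := congrArg List.length hw
      simpa [ωtake] using this.symm
    have hpn : p < n := by omega
    -- element p of ωtake x n is x p = true
    have hel : (List.replicate i false ++ List.replicate j true)[p]? = some true := by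
      rw [← hw]
      simp [ωtake, hpn, hp]
    have hip : i ≤ p := by
      by_contra hlt
      push_neg at hlt
      rw [List.getElem?_append_left (by simpa using hlt)] at hel
      simp [hlt] at hel
    omega
end
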